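/- arXiv:2004.00667 — 2 statements merged into one kernel-verified Lean document; each statement's English description precedes it below -/
import Mathlib

section
/- Let I be a compact interval of length d0 ≥ 4 m² h, and let x_1, ..., x_n ∈ I be points such that every point of I is within distance h of some x_k (i.e., the fill distance of {x_k} in I is at most h). Then for every real polynomial p of degree at most m with sup-norm 1 on I, there exists k such that |p(x_k)| ≥ 1/2. -/
/-!
Markov's inequality `|p'| ≤ 2m²/(b - a)` on `[a, b]` makes `p` move by at most
`2m²h/(b - a) ≤ 1/2` between a point where `|p| = 1` and a node within distance `h` of it.

Markov's inequality is proved classically. *Schur*: if `deg c < m` and `|c(cos θ) sin θ| ≤ M`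
for all `θ`, then `|c| ≤ mM` on `[-1, 1]`. Where `sin (arccos x) ≥ sin (π/2m) ≥ 1/m` this is
immediate; next to `±1` it follows from Lagrange interpolation at the zeros `cos θᵢ` of `T_m`,
because `|T_m'(cos θᵢ)| sin θᵢ = m` and `|T_m'| ≤ m²`. *Bernstein*:
`p(cos(θ₀ + θ)) - p(cos(θ₀ - θ)) = 2 c(cos θ) sin θ` with `deg c < m` and
`c(1) = -p'(cos θ₀) sin θ₀` (check it on each `T_k`), so Schur at `1` gives
`|p'(cos θ) sin θ| ≤ m`, and Schur applied to `p'` then gives `|p'| ≤ m²`.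
-/

open Polynomial Real Finset

namespace Lagrange

/-- To the right of all nodes, the numerators `∏ j ≠ i, (x - v j)` of the Lagrange basis are
nonnegative and sum to `w'(x)`, where `w` is the nodal polynomial. -/
theorem abs_eval_le_of_forall_node_le {ι : Type*} [DecidableEq ι] {s : Finset ι} {v : ι → ℝ}
    (hvs : Set.InjOn v s) {c : ℝ[X]} (hc : c.degree < #s) {K x : ℝ}
    (hK : ∀ i ∈ s, |c.eval (v i)| ≤ K * |(derivative (nodal s v)).eval (v i)|)
    (hx : ∀ i ∈ s, v i ≤ x) : |c.eval x| ≤ K * (derivative (nodal s v)).eval x := by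
  have hnode : ∀ i ∈ s, (derivative (nodal s v)).eval (v i) = ∏ j ∈ s.erase i, (v i - v j) :=
    fun i hi ↦ by rw [eval_nodal_derivative_eval_node_eq hi, eval_nodal]
  have hnode_ne : ∀ i ∈ s, (derivative (nodal s v)).eval (v i) ≠ 0 := fun i hi ↦ by
    simpa [nodalWeight_eq_eval_derivative_nodal hi] using nodalWeight_ne_zero hvs hi
  have hexpand : c.eval x = ∑ i ∈ s, c.eval (v i) / (derivative (nodal s v)).eval (v i) *
      ∏ j ∈ s.erase i, (x - v j) := by
    nth_rewrite 1 [eq_interpolate hvs hc]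
    rw [interpolate_eq_sum, eval_finsetSum]
    refine sum_congr rfl fun i hi ↦ ?_
    simp [eval_prod, hnode i hi]
  have hderiv : (derivative (nodal s v)).eval x = ∑ i ∈ s, ∏ j ∈ s.erase i, (x - v j) := by
    simp [derivative_nodal, eval_finsetSum, eval_nodal]
  have hprod_nonneg : ∀ i ∈ s, 0 ≤ ∏ j ∈ s.erase i, (x - v j) := fun i _ ↦
    prod_nonneg fun j hj ↦ sub_nonneg.mpr (hx j (mem_of_mem_erase hj))
  rw [hexpand, hderiv, mul_sum]
  refine (abs_sum_le_sum_abs _ _).trans (sum_le_sum fun i hi ↦ ?_)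
  rw [abs_mul, abs_of_nonneg (hprod_nonneg i hi), abs_div]
  exact mul_le_mul_of_nonneg_right ((div_le_iff₀ (abs_pos.mpr (hnode_ne i hi))).mpr (hK i hi))
    (hprod_nonneg i hi)

end Lagrange

namespace Polynomial.Chebyshev

/-- The zeros of `T n` are `cos (zeroAngle n i)`, `i < n`. -/
noncomputable def zeroAngle (n i : ℕ) : ℝ := (2 * i + 1) * π / (2 * n)

lemma zeroAngle_mem_Ioo {n i : ℕ} (hi : i < n) : zeroAngle n i ∈ Set.Ioo 0 π := by
  have hi' : (i : ℝ) + 1 ≤ n := by exact_mod_cast hi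
  have hn : (0 : ℝ) < n := by linarith [(i.cast_nonneg : (0 : ℝ) ≤ i)]
  refine ⟨by unfold zeroAngle; positivity, ?_⟩
  rw [zeroAngle, div_lt_iff₀ (by positivity)]
  nlinarith [pi_pos]

lemma abs_sin_mul_zeroAngle {n : ℕ} (hn : n ≠ 0) (i : ℕ) : |sin (n * zeroAngle n i)| = 1 := by
  have : (n : ℝ) * zeroAngle n i = i * π + π / 2 := by
    rw [zeroAngle]; field_simp
  rw [this, sin_add_pi_div_two]
  exact_mod_cast abs_cos_int_mul_pi i

lemma inv_le_sin_zeroAngle_zero {m : ℕ} (hm : m ≠ 0) : (m : ℝ)⁻¹ ≤ sin (zeroAngle m 0) := by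
  have hmpos : (0 : ℝ) < m := by positivity
  have hangle : zeroAngle m 0 = π / (2 * m) := by simp [zeroAngle]
  have hle : zeroAngle m 0 ≤ π / 2 := by
    rw [hangle]
    have : (1 : ℝ) ≤ m := by exact_mod_cast Nat.one_le_iff_ne_zero.mpr hm
    exact div_le_div_of_nonneg_left pi_pos.le two_pos (by linarith)
  refine le_trans (le_of_eq ?_) (mul_le_sin (zeroAngle_mem_Ioo (Nat.pos_of_ne_zero hm)).1.le hle)
  rw [hangle]
  field_simp

lemma injOn_cos_zeroAngle (n : ℕ) : Set.InjOn (fun i ↦ cos (zeroAngle n i)) (range n) :=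
  (range n).nodup_map_iff_injOn.mp (roots_T_real_nodup n)

lemma T_eq_C_mul_nodal (n : ℕ) :
    T ℝ n = Polynomial.C (2 ^ (n - 1)) *
      Lagrange.nodal (range n) (fun i ↦ cos (zeroAngle n i)) := by
  have hroots' : (T ℝ n).roots = ((range n).image fun i ↦ cos (zeroAngle n i)).val :=
    roots_T_real n
  have hroots : Multiset.card (T ℝ n).roots = (T ℝ n).natDegree := by
    rw [hroots', Finset.card_val, card_image_of_injOn (injOn_cos_zeroAngle n)]
    simp
  rw [← C_leadingCoeff_mul_prod_multiset_X_sub_C hroots, hroots', leadingCoeff_T,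
    ← Finset.prod_eq_multiset_prod, prod_image (injOn_cos_zeroAngle n)]
  rfl

lemma derivative_T_eval_cos_mul_sin (n : ℤ) (θ : ℝ) :
    (derivative (T ℝ n)).eval (cos θ) * sin θ = n * sin (n * θ) := by
  rw [T_derivative_eq_U, eval_mul, mul_assoc, U_real_cos]
  simp

lemma abs_derivative_T_eval_cos_zeroAngle_mul_sin {n : ℕ} (hn : n ≠ 0) {i : ℕ} (hi : i < n) :
    |(derivative (T ℝ n)).eval (cos (zeroAngle n i))| * sin (zeroAngle n i) = n := by
  have hsin : 0 < sin (zeroAngle n i) := sin_pos_of_mem_Ioo (zeroAngle_mem_Ioo hi)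
  rw [← abs_of_pos hsin, ← abs_mul, derivative_T_eval_cos_mul_sin, Int.cast_natCast, abs_mul,
    abs_sin_mul_zeroAngle hn, Nat.abs_cast, mul_one]

lemma abs_derivative_T_eval_le (n : ℤ) {x : ℝ} (hx : |x| ≤ 1) :
    |(derivative (T ℝ n)).eval x| ≤ n ^ 2 := by
  simpa [derivative_T_eval_one] using abs_iterate_derivative_T_real_le n 1 hx

lemma T_eval_cos_add_sub_T_eval_cos_sub (n : ℤ) (θ₀ θ : ℝ) :
    (T ℝ n).eval (cos (θ₀ + θ)) - (T ℝ n).eval (cos (θ₀ - θ)) =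
      -2 * sin (n * θ₀) * ((U ℝ (n - 1)).eval (cos θ) * sin θ) := by
  rw [T_real_cos, T_real_cos, U_real_cos, cos_sub_cos]
  push_cast
  ring_nf

theorem abs_eval_le_of_cos_zeroAngle_le {m : ℕ} (hm : m ≠ 0) {c : ℝ[X]} (hc : c.degree < m)
    {M : ℝ} (hM : ∀ θ, |c.eval (cos θ) * sin θ| ≤ M) {x : ℝ}
    (hx₀ : cos (zeroAngle m 0) ≤ x) (hx₁ : x ≤ 1) : |c.eval x| ≤ m * M := by
  set w := Lagrange.nodal (range m) (fun i ↦ cos (zeroAngle m i))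
  have hmpos : (0 : ℝ) < m := by positivity
  have hM₀ : 0 ≤ M := by simpa using hM 0
  have hT : ∀ y, (derivative (T ℝ m)).eval y = 2 ^ (m - 1) * (derivative w).eval y := fun y ↦ by
    rw [T_eq_C_mul_nodal, derivative_C_mul, eval_mul, eval_C]
  have hnodes : ∀ i ∈ range m, |c.eval (cos (zeroAngle m i))| ≤
      M * 2 ^ (m - 1) / m * |(derivative w).eval (cos (zeroAngle m i))| := by
    intro i hi
    have hi : i < m := mem_range.mp hi
    have hsin : 0 < sin (zeroAngle m i) := sin_pos_of_mem_Ioo (zeroAngle_mem_Ioo hi)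
    have hval := hM (zeroAngle m i)
    have hder := abs_derivative_T_eval_cos_zeroAngle_mul_sin hm hi
    rw [hT, abs_mul, abs_of_pos (by positivity : (0 : ℝ) < 2 ^ (m - 1))] at hder
    rw [abs_mul, abs_of_pos hsin] at hval
    rw [div_mul_eq_mul_div, le_div_iff₀ hmpos, ← hder]
    nlinarith [abs_nonneg (c.eval (cos (zeroAngle m i))),
      abs_nonneg ((derivative w).eval (cos (zeroAngle m i)))]
  have hx : ∀ i ∈ range m, cos (zeroAngle m i) ≤ x := by
    intro i hi
    refine le_trans (cos_le_cos_of_nonneg_of_le_pi (zeroAngle_mem_Ioo (by omega)).1.le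
      (zeroAngle_mem_Ioo (mem_range.mp hi)).2.le ?_) hx₀
    unfold zeroAngle
    gcongr
    simp
  have hx' : |x| ≤ 1 := abs_le.mpr ⟨by linarith [neg_one_le_cos (zeroAngle m 0)], hx₁⟩
  calc |c.eval x| ≤ M * 2 ^ (m - 1) / m * (derivative w).eval x :=
        Lagrange.abs_eval_le_of_forall_node_le (injOn_cos_zeroAngle m) (by simpa using hc)
          hnodes hx
    _ = M / m * (derivative (T ℝ m)).eval x := by rw [hT]; ring
    _ ≤ M / m * m ^ 2 := by
        gcongr
        exact (le_abs_self _).trans (by exact_mod_cast abs_derivative_T_eval_le m hx')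
    _ = m * M := by field_simp

end Polynomial.Chebyshev

namespace Polynomial

open Polynomial.Chebyshev

theorem abs_eval_le_of_abs_eval_cos_mul_sin_le {m : ℕ} {c : ℝ[X]} (hc : c.degree < m) {M : ℝ}
    (hM : ∀ θ, |c.eval (cos θ) * sin θ| ≤ M) {x : ℝ} (hx : |x| ≤ 1) : |c.eval x| ≤ m * M := by
  rcases eq_or_ne m 0 with rfl | hm
  · simp [show c = 0 by simpa using hc]
  wlog hx₀ : 0 ≤ x generalizing c x
  · have hdeg : (c.comp (-X)).degree < m := by rwa [degree_comp_neg_X]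
    have hM' : ∀ θ, |(c.comp (-X)).eval (cos θ) * sin θ| ≤ M := fun θ ↦ by
      simpa [cos_pi_sub, sin_pi_sub] using hM (π - θ)
    simpa using this hdeg hM' (x := -x) (by rwa [abs_neg]) (by linarith)
  have hcos : cos (arccos x) = x := cos_arccos (by linarith [abs_le.mp hx]) (abs_le.mp hx).2
  by_cases hθ : arccos x ≤ zeroAngle m 0
  · refine Chebyshev.abs_eval_le_of_cos_zeroAngle_le hm hc hM ?_ (abs_le.mp hx).2
    rw [← hcos]
    exact cos_le_cos_of_nonneg_of_le_pi (arccos_nonneg x)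
      (zeroAngle_mem_Ioo (Nat.pos_of_ne_zero hm)).2.le hθ
  · have hangle := zeroAngle_mem_Ioo (Nat.pos_of_ne_zero hm)
    have hsin : (m : ℝ)⁻¹ ≤ sin (arccos x) :=
      (inv_le_sin_zeroAngle_zero hm).trans (sin_le_sin_of_le_of_le_pi_div_two
        (by linarith [hangle.1, pi_pos]) (arccos_le_pi_div_two.mpr hx₀) (not_le.mp hθ).le)
    have hval := hM (arccos x)
    have hmpos : (0 : ℝ) < m := by positivity
    rw [hcos, abs_mul, abs_of_nonneg ((inv_nonneg.mpr hmpos.le).trans hsin)] at hval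
    calc |c.eval x| = |c.eval x| * (m : ℝ)⁻¹ * m := by field_simp
      _ ≤ |c.eval x| * sin (arccos x) * m := by gcongr
      _ ≤ M * m := by gcongr
      _ = m * M := mul_comm _ _

theorem exists_eval_cos_add_sub_eval_cos_sub {m : ℕ} {p : ℝ[X]} (hp : p.natDegree ≤ m)
    (θ₀ : ℝ) : ∃ c ∈ degreeLT ℝ m,
      (∀ θ, p.eval (cos (θ₀ + θ)) - p.eval (cos (θ₀ - θ)) = 2 * (c.eval (cos θ) * sin θ)) ∧
      c.eval 1 = -((derivative p).eval (cos θ₀) * sin θ₀) := by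
  have hspan : p ∈ Submodule.span ℝ (chebyshevTsequence ℝ '' Set.Iic m) := by
    rw [Sequence.span_degreeLE _ (by simp)]
    exact mem_degreeLE.mpr (natDegree_le_iff_degree_le.mp hp)
  clear hp
  induction hspan using Submodule.span_induction with
  | mem q hq =>
    obtain ⟨k, hk, rfl⟩ := hq
    refine ⟨-sin (k * θ₀) • U ℝ (k - 1), Submodule.smul_mem _ _ ?_, fun θ ↦ ?_, ?_⟩
    · rcases k with _ | j
      · simp
      · rw [mem_degreeLT, Nat.cast_succ, add_sub_cancel_right, degree_U_natCast]
        exact_mod_cast Set.mem_Iic.mp hk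
    · rw [chebyshevTsequence, T_eval_cos_add_sub_T_eval_cos_sub]
      simp only [eval_smul, smul_eq_mul]
      push_cast
      ring
    · simp only [chebyshevTsequence, eval_smul, smul_eq_mul, U_eval_one]
      rw [← Int.cast_natCast k, derivative_T_eval_cos_mul_sin]
      push_cast
      ring
  | zero => exact ⟨0, Submodule.zero_mem _, by simp, by simp⟩
  | add q r _ _ hq hr =>
    obtain ⟨c, hc, hcq, hc1⟩ := hq
    obtain ⟨d, hd, hdr, hd1⟩ := hr
    refine ⟨c + d, Submodule.add_mem _ hc hd, fun θ ↦ ?_, ?_⟩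
    · simp only [eval_add]
      linear_combination hcq θ + hdr θ
    · simp only [eval_add, derivative_add]
      linear_combination hc1 + hd1
  | smul a q _ hq =>
    obtain ⟨c, hc, hcq, hc1⟩ := hq
    refine ⟨a • c, Submodule.smul_mem _ a hc, fun θ ↦ ?_, ?_⟩
    · simp only [eval_smul, smul_eq_mul]
      linear_combination a * hcq θ
    · simp only [eval_smul, derivative_smul, smul_eq_mul]
      linear_combination a * hc1

theorem abs_derivative_eval_cos_mul_sin_le {m : ℕ} {p : ℝ[X]} (hp : p.natDegree ≤ m) {M : ℝ}
    (hM : ∀ x ∈ Set.Icc (-1) 1, |p.eval x| ≤ M) (θ₀ : ℝ) :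
    |(derivative p).eval (cos θ₀) * sin θ₀| ≤ m * M := by
  obtain ⟨c, hc, hodd, hc1⟩ := exists_eval_cos_add_sub_eval_cos_sub hp θ₀
  have hcM : ∀ θ, |c.eval (cos θ) * sin θ| ≤ M := fun θ ↦ by
    have h₁ := abs_le.mp (hM _ (cos_mem_Icc (θ₀ + θ)))
    have h₂ := abs_le.mp (hM _ (cos_mem_Icc (θ₀ - θ)))
    have := hodd θ
    exact abs_le.mpr ⟨by linarith, by linarith⟩
  rw [← abs_neg, ← hc1]
  exact abs_eval_le_of_abs_eval_cos_mul_sin_le (mem_degreeLT.mp hc) hcM (by simp)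

theorem abs_derivative_eval_le {m : ℕ} {p : ℝ[X]} (hp : p.natDegree ≤ m) {M : ℝ}
    (hM : ∀ x ∈ Set.Icc (-1) 1, |p.eval x| ≤ M) {x : ℝ} (hx : x ∈ Set.Icc (-1) 1) :
    |(derivative p).eval x| ≤ m ^ 2 * M := by
  have hdeg : (derivative p).degree < m := by
    rcases eq_or_ne p 0 with rfl | hp₀
    · simp
    · exact (degree_derivative_lt hp₀).trans_le (degree_le_natDegree.trans (by exact_mod_cast hp))
  calc |(derivative p).eval x| ≤ m * (m * M) := abs_eval_le_of_abs_eval_cos_mul_sin_le hdeg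
        (abs_derivative_eval_cos_mul_sin_le hp hM) (abs_le.mpr hx)
    _ = m ^ 2 * M := by ring

theorem abs_derivative_eval_le_of_mem_Icc {m : ℕ} {p : ℝ[X]} (hp : p.natDegree ≤ m)
    {a b M : ℝ} (hab : a < b) (hM : ∀ t ∈ Set.Icc a b, |p.eval t| ≤ M) {t : ℝ}
    (ht : t ∈ Set.Icc a b) : |(derivative p).eval t| ≤ 2 * m ^ 2 * M / (b - a) := by
  have hba : 0 < b - a := sub_pos.mpr hab
  set ℓ : ℝ[X] := C ((b - a) / 2) * X + C ((a + b) / 2)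
  have hℓ : ∀ y, ℓ.eval y = (b - a) / 2 * y + (a + b) / 2 := fun y ↦ by simp [ℓ]
  have hdeg : (p.comp ℓ).natDegree ≤ m :=
    natDegree_comp_le.trans ((Nat.mul_le_mul hp natDegree_linear_le).trans_eq (mul_one m))
  have hM' : ∀ y ∈ Set.Icc (-1) 1, |(p.comp ℓ).eval y| ≤ M := fun y hy ↦ by
    rw [eval_comp, hℓ]
    exact hM _ ⟨by nlinarith [hy.1], by nlinarith [hy.2]⟩
  set y := (2 * t - (a + b)) / (b - a) with hy_def
  have hy : y ∈ Set.Icc (-1) 1 := by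
    constructor
    · rw [le_div_iff₀ hba]; linarith [ht.1]
    · rw [div_le_one hba]; linarith [ht.2]
  have hℓy : ℓ.eval y = t := by rw [hℓ, hy_def]; field_simp; ring
  have hmarkov := abs_derivative_eval_le hdeg hM' hy
  rw [derivative_comp, eval_mul, eval_comp, hℓy, abs_mul] at hmarkov
  have hℓ' : (derivative ℓ).eval y = (b - a) / 2 := by simp [ℓ]
  rw [hℓ', abs_of_pos (half_pos hba)] at hmarkov
  rw [le_div_iff₀ hba]
  linarith

theorem abs_eval_sub_eval_le {m : ℕ} {p : ℝ[X]} (hp : p.natDegree ≤ m)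
    {a b M : ℝ} (hab : a < b) (hM : ∀ t ∈ Set.Icc a b, |p.eval t| ≤ M) {s t : ℝ}
    (hs : s ∈ Set.Icc a b) (ht : t ∈ Set.Icc a b) :
    |p.eval s - p.eval t| ≤ 2 * m ^ 2 * M / (b - a) * |s - t| :=
  (convex_Icc a b).norm_image_sub_le_of_norm_hasDerivWithin_le
    (fun u _ ↦ (p.hasDerivAt u).hasDerivWithinAt)
    (fun _ hu ↦ abs_derivative_eval_le_of_mem_Icc hp hab hM hu) ht hs

end Polynomial

theorem stmt_1_general (m n : ℕ) (a b : ℝ) (hab : a < b) (h : ℝ)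
    (hlen : 4 * (m : ℝ) ^ 2 * h ≤ b - a)
    (x : Fin n → ℝ) (hx : ∀ k, x k ∈ Set.Icc a b)
    (hfill : ∀ t ∈ Set.Icc a b, ∃ k, |t - x k| ≤ h)
    (p : Polynomial ℝ) (hdeg : p.natDegree ≤ m)
    (hsup : ∀ t ∈ Set.Icc a b, |p.eval t| ≤ 1)
    (hattain : ∃ t0 ∈ Set.Icc a b, |p.eval t0| = 1) :
    ∃ k, 1 / 2 ≤ |p.eval (x k)| := by
  obtain ⟨t₀, ht₀, hpt₀⟩ := hattain
  obtain ⟨k, hk⟩ := hfill t₀ ht₀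
  refine ⟨k, ?_⟩
  have hclose : |p.eval t₀ - p.eval (x k)| ≤ 1 / 2 :=
    calc |p.eval t₀ - p.eval (x k)| ≤ 2 * m ^ 2 * 1 / (b - a) * |t₀ - x k| :=
          abs_eval_sub_eval_le hdeg hab hsup ht₀ (hx k)
      _ ≤ 2 * m ^ 2 * 1 / (b - a) * h := by gcongr
      _ ≤ 1 / 2 := by rw [div_mul_eq_mul_div, div_le_iff₀ (sub_pos.mpr hab)]; linarith
  linarith [abs_sub_abs_le_abs_sub (p.eval t₀) (p.eval (x k))]

/-- If the fill distance of points in a compact interval I of length d0 ≥ 4 m² h is at most h,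
then every polynomial of degree ≤ m with sup-norm 1 on I has |p| ≥ 1/2 at some design point. -/
theorem stmt_1 (m n : ℕ) (a b : ℝ) (hab : a < b) (h : ℝ) (hh : 0 < h)
    (hlen : 4 * (m : ℝ) ^ 2 * h ≤ b - a)
    (x : Fin n → ℝ) (hx : ∀ k, x k ∈ Set.Icc a b)
    (hfill : ∀ t ∈ Set.Icc a b, ∃ k, |t - x k| ≤ h)
    (p : Polynomial ℝ) (hdeg : p.natDegree ≤ m)
    (hsup : ∀ t ∈ Set.Icc a b, |p.eval t| ≤ 1)
    (hattain : ∃ t0 ∈ Set.Icc a b, |p.eval t0| = 1) :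
    ∃ k, 1 / 2 ≤ |p.eval (x k)| :=
  stmt_1_general m n a b hab h hlen x hx hfill p hdeg hsup hattain
end

section
/- Suppose, for each direction j = 1, ..., d and each point x ∈ [0,1]^d, there exist coefficients α(x) ∈ ℝ^n (the same for all j) reproducing polynomials of degree ≤ m in each coordinate, with ℓ1 norm at most 2d, support only on points with |x_{k(j)} - x_{(j)}| ≤ 4m²h_j, and suppose each one-dimensional spectral density f satisfies f(ω) ≤ c(1+ω²)^{-(ν+1/2)} with ν + 1/2 ≤ m. If Q_j(u) = ∫_ℝ |1 - Σ_k u_k e^{iω(x_{k(j)} - x_{(j)})}|² f(ω) dω, then Q_j(α(x)) ≤ C d² h_j^{2ν} for a constant C independent of d, n and the points. -/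
/-!
Write `δ_k = x_{k(j)} - x_{(j)}` and `G(ω) = 1 - ∑ α_k e^{iωδ_k}`. Polynomial reproduction says
that `∑ α_k δ_k^l` is `1` for `l = 0` and `0` for `1 ≤ l ≤ m`, so `1` is the `α`-average of the
degree-`m` Taylor polynomials of the exponentials and `|G(ω)| ≤ ∑ |α_k| |ωδ_k|^{m+1} e^{|ωδ_k|}`.
By the support condition this is `O(d (h_j|ω|)^{m+1})` on `|ω| ≤ 1/h_j`, where the integrand is
then `O(d² h_j^{2ν+1})`. Beyond `1/h_j` the crude bound `|G| ≤ 1 + 2d` and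
`f(ω) ≤ c|ω|^{-(2ν+1)}` leave a tail of order `d² h_j^{2ν}`.
-/

open MeasureTheory Finset Set Complex

theorem norm_one_sub_sum_mul_exp_le {ι : Type*} [Fintype ι] (α z : ι → ℂ) (m : ℕ)
    (hmom : ∀ l ≤ m, ∑ k, α k * z k ^ l = 0 ^ l) :
    ‖1 - ∑ k, α k * exp (z k)‖ ≤ ∑ k, ‖α k‖ * (‖z k‖ ^ (m + 1) * Real.exp ‖z k‖) := by
  set T : ι → ℂ := fun k => ∑ l ∈ range (m + 1), z k ^ l / l.factorial
  have hT : ∑ k, α k * T k = 1 := by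
    simp only [T, mul_sum, mul_div_assoc']
    rw [sum_comm, sum_eq_single_of_mem 0 (by simp)]
    · simpa using hmom 0 (Nat.zero_le _)
    · intro l hl hl0
      rw [← sum_div, hmom l (Nat.lt_succ_iff.1 (mem_range.1 hl)), zero_pow hl0, zero_div]
  calc ‖1 - ∑ k, α k * exp (z k)‖ = ‖∑ k, α k * (exp (z k) - T k)‖ := by
        rw [← norm_neg, ← hT, ← sum_sub_distrib, ← sum_neg_distrib]
        congr 1
        exact sum_congr rfl fun k _ => by ring
    _ ≤ ∑ k, ‖α k‖ * (‖z k‖ ^ (m + 1) * Real.exp ‖z k‖) := by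
        refine (norm_sum_le _ _).trans (sum_le_sum fun k _ => ?_)
        rw [norm_mul]
        gcongr
        exact norm_exp_sub_sum_le_norm_mul_exp _ _

theorem sum_mul_sub_pow_eq_zero_pow {ι : Type*} [Fintype ι] {α x : ι → ℝ} {y : ℝ} {m : ℕ}
    (hrep : ∀ p : Polynomial ℝ, p.natDegree ≤ m → ∑ k, α k * p.eval (x k) = p.eval y)
    {l : ℕ} (hl : l ≤ m) : ∑ k, α k * (x k - y) ^ l = 0 ^ l := by
  have := hrep ((Polynomial.X - Polynomial.C y) ^ l) (by simpa using hl)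
  simp only [Polynomial.eval_pow, Polynomial.eval_sub, Polynomial.eval_X, Polynomial.eval_C,
    sub_self] at this
  exact this

theorem mul_abs_pow_mul_one_add_sq_rpow_neg_le {h ω s : ℝ} {N : ℕ} (hh : 0 ≤ h)
    (hω : h * |ω| ≤ 1) (hs : 0 ≤ s) (hsN : 2 * s ≤ N) :
    (h * |ω|) ^ N * (1 + ω ^ 2) ^ (-s) ≤ h ^ (2 * s) := by
  have hpos : 0 < 1 + ω ^ 2 := by positivity
  calc (h * |ω|) ^ N * (1 + ω ^ 2) ^ (-s)
      ≤ (h * |ω|) ^ (2 * s) * (1 + ω ^ 2) ^ (-s) := by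
        gcongr
        rw [← Real.rpow_natCast]
        exact Real.rpow_le_rpow_of_exponent_ge' (by positivity) hω (by positivity) hsN
    _ = h ^ (2 * s) * ((ω ^ 2) ^ s * (1 + ω ^ 2) ^ (-s)) := by
        rw [Real.mul_rpow hh (abs_nonneg ω), Real.rpow_mul (abs_nonneg ω), Real.rpow_two,
          sq_abs, mul_assoc]
    _ ≤ h ^ (2 * s) * ((1 + ω ^ 2) ^ s * (1 + ω ^ 2) ^ (-s)) := by
        gcongr
        linarith
    _ = h ^ (2 * s) := by rw [← Real.rpow_add hpos, add_neg_cancel, Real.rpow_zero, mul_one]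

theorem one_add_sq_rpow_neg_le_rpow {ω s : ℝ} (hω : 0 < ω) (hs : 0 ≤ s) :
    (1 + ω ^ 2) ^ (-s) ≤ ω ^ (-(2 * s)) := by
  rw [neg_mul_eq_mul_neg, Real.rpow_mul hω.le, Real.rpow_two]
  exact Real.rpow_le_rpow_of_nonpos (by positivity) (by linarith) (by linarith)

theorem setIntegral_Ioi_le_of_le_rpow {F : ℝ → ℝ} {a p B : ℝ} (hF : IntegrableOn F (Ioi a))
    (ha : 0 < a) (hp : p < -1) (hle : ∀ ω, a < ω → F ω ≤ B * ω ^ p) :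
    ∫ ω in Ioi a, F ω ≤ B * (-a ^ (p + 1) / (p + 1)) := by
  rw [← integral_Ioi_rpow_of_lt hp ha, ← integral_const_mul]
  exact setIntegral_mono_on hF ((integrableOn_Ioi_rpow_of_lt hp ha).const_mul B)
    measurableSet_Ioi hle

theorem integral_le_of_le_const_of_le_abs_rpow {F : ℝ → ℝ} {a p A B : ℝ} (hF : Integrable F)
    (ha : 0 < a) (hp : p < -1) (hlow : ∀ ω, |ω| ≤ a → F ω ≤ A)
    (hhigh : ∀ ω, a < |ω| → F ω ≤ B * |ω| ^ p) :
    ∫ ω, F ω ≤ 2 * a * A + 2 * B * (-a ^ (p + 1) / (p + 1)) := by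
  have hcompl : (Icc (-a) a)ᶜ = Iio (-a) ∪ Ioi a := by
    ext ω
    simp only [Set.mem_compl_iff, Set.mem_Icc, Set.mem_union, Set.mem_Iio, Set.mem_Ioi,
      not_and_or, not_le]
  have hIcc : ∫ ω in Icc (-a) a, F ω ≤ 2 * a * A := by
    calc ∫ ω in Icc (-a) a, F ω ≤ ∫ _ in Icc (-a) a, A :=
          setIntegral_mono_on hF.integrableOn (integrableOn_const (by simp))
            measurableSet_Icc fun ω hω => hlow ω (abs_le.2 hω)
      _ = 2 * a * A := by
          rw [setIntegral_const, smul_eq_mul, Real.volume_real_Icc_of_le (by linarith)]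
          ring
  have hIoi : ∫ ω in Ioi a, F ω ≤ B * (-a ^ (p + 1) / (p + 1)) := by
    refine setIntegral_Ioi_le_of_le_rpow hF.integrableOn ha hp fun ω hω => ?_
    have hω' : |ω| = ω := abs_of_pos (ha.trans hω)
    simpa only [hω'] using hhigh ω (hω'.symm ▸ hω)
  have hIio : ∫ ω in Iio (-a), F ω ≤ B * (-a ^ (p + 1) / (p + 1)) := by
    rw [← integral_Iic_eq_integral_Iio, ← integral_comp_neg_Ioi]
    refine setIntegral_Ioi_le_of_le_rpow hF.comp_neg.integrableOn ha hp fun ω hω => ?_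
    have hω' : |-ω| = ω := by rw [abs_neg, abs_of_pos (ha.trans hω)]
    simpa only [hω'] using hhigh (-ω) (hω'.symm ▸ hω)
  rw [← integral_add_compl measurableSet_Icc hF, hcompl,
    setIntegral_union ((Set.Iic_disjoint_Ioi (by linarith)).mono_left Set.Iio_subset_Iic_self)
      measurableSet_Ioi hF.integrableOn hF.integrableOn]
  linarith

section ErrorSymbol

variable {ι : Type*} [Fintype ι]

/-- With `δ_k = x_{k(j)} - x_{(j)}`, the paper's `Q_j(α)` is `∫ ‖errorSymbol α δ ω‖² f ω`. -/
noncomputable def errorSymbol (α δ : ι → ℝ) (ω : ℝ) : ℂ := 1 - ∑ k, (α k : ℂ) * exp (I * ω * δ k)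

variable {α δ : ι → ℝ} {f : ℝ → ℝ} {c s L : ℝ}

theorem continuous_errorSymbol (α δ : ι → ℝ) : Continuous (errorSymbol α δ) := by
  unfold errorSymbol
  fun_prop

theorem norm_errorSymbol_le_one_add (α δ : ι → ℝ) (ω : ℝ) :
    ‖errorSymbol α δ ω‖ ≤ 1 + ∑ k, |α k| := by
  refine (norm_sub_le _ _).trans ?_
  rw [norm_one]
  gcongr
  refine (norm_sum_le _ _).trans_eq (sum_congr rfl fun k _ => ?_)
  simp [norm_exp]

theorem norm_errorSymbol_le_of_moments {m : ℕ} {R : ℝ}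
    (hmom : ∀ l ≤ m, ∑ k, α k * δ k ^ l = 0 ^ l) (hsupp : ∀ k, α k ≠ 0 → |δ k| ≤ R) (ω : ℝ) :
    ‖errorSymbol α δ ω‖ ≤ (∑ k, |α k|) * ((|ω| * R) ^ (m + 1) * Real.exp (|ω| * R)) := by
  have hmomC : ∀ l ≤ m, ∑ k, (α k : ℂ) * (I * ω * δ k) ^ l = 0 ^ l := by
    intro l hl
    have := congrArg (fun t : ℝ => (I * ω) ^ l * (t : ℂ)) (hmom l hl)
    simp only [ofReal_sum, ofReal_mul, ofReal_pow, mul_sum, ofReal_zero] at this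
    rw [← mul_pow, mul_zero] at this
    rw [← this]
    exact sum_congr rfl fun k _ => by ring
  refine (norm_one_sub_sum_mul_exp_le _ _ m hmomC).trans ?_
  rw [sum_mul]
  refine sum_le_sum fun k _ => ?_
  rw [norm_real, Real.norm_eq_abs]
  rcases eq_or_ne (α k) 0 with hk | hk
  · simp [hk]
  have hz : ‖I * ω * δ k‖ ≤ |ω| * R := by
    rw [norm_mul, norm_mul, norm_I, one_mul, norm_real, norm_real, Real.norm_eq_abs,
      Real.norm_eq_abs]
    exact mul_le_mul_of_nonneg_left (hsupp k hk) (abs_nonneg ω)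
  have hR : 0 ≤ |ω| * R := (norm_nonneg _).trans hz
  gcongr

theorem norm_errorSymbol_sq_mul_le_of_abs_le_inv {m : ℕ} {R h ω : ℝ}
    (hmom : ∀ l ≤ m, ∑ k, α k * δ k ^ l = 0 ^ l) (hsupp : ∀ k, α k ≠ 0 → |δ k| ≤ R * h)
    (hα : ∑ k, |α k| ≤ L) (hR : 0 ≤ R) (hh : 0 < h) (hω : |ω| ≤ h⁻¹) (hc : 0 ≤ c)
    (hs : 0 ≤ s) (hsm : s ≤ m + 1) (hfb : f ω ≤ c * (1 + ω ^ 2) ^ (-s)) :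
    ‖errorSymbol α δ ω‖ ^ 2 * f ω ≤ c * (L * (R ^ (m + 1) * Real.exp R)) ^ 2 * h ^ (2 * s) := by
  have hhω : h * |ω| ≤ 1 := by
    calc h * |ω| ≤ h * h⁻¹ := by gcongr
      _ = 1 := mul_inv_cancel₀ hh.ne'
  have hG : ‖errorSymbol α δ ω‖ ≤ L * (R ^ (m + 1) * Real.exp R) * (h * |ω|) ^ (m + 1) := by
    refine (norm_errorSymbol_le_of_moments hmom hsupp ω).trans ?_
    have hr : |ω| * (R * h) = R * (h * |ω|) := by ring
    have hRr : R * (h * |ω|) ≤ R := mul_le_of_le_one_right hR hhω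
    have hL : 0 ≤ L := (sum_nonneg fun k _ => abs_nonneg (α k)).trans hα
    calc (∑ k, |α k|) * ((|ω| * (R * h)) ^ (m + 1) * Real.exp (|ω| * (R * h)))
        ≤ L * (R ^ (m + 1) * (h * |ω|) ^ (m + 1) * Real.exp R) := by rw [hr, mul_pow]; gcongr
      _ = L * (R ^ (m + 1) * Real.exp R) * (h * |ω|) ^ (m + 1) := by ring
  calc ‖errorSymbol α δ ω‖ ^ 2 * f ω
      ≤ ‖errorSymbol α δ ω‖ ^ 2 * (c * (1 + ω ^ 2) ^ (-s)) := by gcongr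
    _ ≤ (L * (R ^ (m + 1) * Real.exp R) * (h * |ω|) ^ (m + 1)) ^ 2
          * (c * (1 + ω ^ 2) ^ (-s)) := by gcongr
    _ = c * (L * (R ^ (m + 1) * Real.exp R)) ^ 2
          * ((h * |ω|) ^ (2 * m + 2) * (1 + ω ^ 2) ^ (-s)) := by ring
    _ ≤ c * (L * (R ^ (m + 1) * Real.exp R)) ^ 2 * h ^ (2 * s) := by
        gcongr
        exact mul_abs_pow_mul_one_add_sq_rpow_neg_le hh.le hhω hs (by push_cast; linarith)

theorem norm_errorSymbol_sq_mul_le_abs_rpow {ω : ℝ} (hω : ω ≠ 0) (hα : ∑ k, |α k| ≤ L)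
    (hc : 0 ≤ c) (hs : 0 ≤ s) (hfb : f ω ≤ c * (1 + ω ^ 2) ^ (-s)) :
    ‖errorSymbol α δ ω‖ ^ 2 * f ω ≤ c * (1 + L) ^ 2 * |ω| ^ (-(2 * s)) := by
  have hG := (norm_errorSymbol_le_one_add α δ ω).trans (by linarith : _ ≤ 1 + L)
  calc ‖errorSymbol α δ ω‖ ^ 2 * f ω
      ≤ ‖errorSymbol α δ ω‖ ^ 2 * (c * (1 + ω ^ 2) ^ (-s)) := by gcongr
    _ ≤ (1 + L) ^ 2 * (c * (1 + |ω| ^ 2) ^ (-s)) := by rw [sq_abs]; gcongr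
    _ ≤ (1 + L) ^ 2 * (c * |ω| ^ (-(2 * s))) := by
        gcongr
        exact one_add_sq_rpow_neg_le_rpow (abs_pos.2 hω) hs
    _ = c * (1 + L) ^ 2 * |ω| ^ (-(2 * s)) := by ring

theorem integral_norm_errorSymbol_sq_mul_le {m : ℕ} {R h ν : ℝ}
    (hmom : ∀ l ≤ m, ∑ k, α k * δ k ^ l = 0 ^ l) (hsupp : ∀ k, α k ≠ 0 → |δ k| ≤ R * h)
    (hα : ∑ k, |α k| ≤ L) (hR : 0 ≤ R) (hh : 0 < h) (hc : 0 ≤ c) (hν : 0 < ν)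
    (hνm : ν + 1 / 2 ≤ m + 1) (hfb : ∀ ω, f ω ≤ c * (1 + ω ^ 2) ^ (-(ν + 1 / 2)))
    (hfi : Integrable f) :
    ∫ ω, ‖errorSymbol α δ ω‖ ^ 2 * f ω
      ≤ c * (2 * (L * (R ^ (m + 1) * Real.exp R)) ^ 2 + (1 + L) ^ 2 / ν) * h ^ (2 * ν) := by
  have hint : Integrable fun ω => ‖errorSymbol α δ ω‖ ^ 2 * f ω :=
    hfi.bdd_mul ((continuous_errorSymbol α δ).norm.pow 2).aestronglyMeasurable
      (ae_of_all _ fun ω => by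
        rw [norm_pow, norm_norm]
        exact pow_le_pow_left₀ (norm_nonneg _) (norm_errorSymbol_le_one_add α δ ω) 2)
  have hs : 0 ≤ ν + 1 / 2 := by linarith
  have key := integral_le_of_le_const_of_le_abs_rpow hint (inv_pos.2 hh)
    (by linarith : -(2 * (ν + 1 / 2)) < -1)
    (fun ω hω => norm_errorSymbol_sq_mul_le_of_abs_le_inv hmom hsupp hα hR hh hω hc hs hνm
      (hfb ω))
    (fun ω hω => norm_errorSymbol_sq_mul_le_abs_rpow (abs_pos.1 ((inv_pos.2 hh).trans hω))
      hα hc hs (hfb ω))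
  rw [show -(2 * (ν + 1 / 2)) + 1 = -(2 * ν) by ring, Real.inv_rpow hh.le, Real.rpow_neg hh.le,
    inv_inv, show 2 * (ν + 1 / 2) = 2 * ν + 1 by ring, Real.rpow_add_one hh.ne'] at key
  refine key.trans_eq ?_
  field_simp

end ErrorSymbol

/-- Main predictive-variance bound for one coordinate: if α reproduces polynomials of
degree ≤ m at the j-th coordinates, has ℓ1 norm ≤ 2d and is supported on points with
|x_{k(j)} - x_{(j)}| ≤ 4m²h_j, and f(ω) ≤ c(1+ω²)^{-(ν+1/2)} with ν + 1/2 ≤ m, then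
Q_j(α) = ∫ |1 - Σ α_k e^{iω(x_{k(j)} - x_{(j)})}|² f(ω) dω ≤ C d² h_j^{2ν},
with C independent of d, n and the points. -/
theorem stmt_18 (m : ℕ) (ν c : ℝ) (hν : 0 < ν) (hc : 0 < c) (hνm : ν + 1 / 2 ≤ m) :
    ∃ C : ℝ, ∀ (d n : ℕ) (x : Fin n → Fin d → ℝ) (h : Fin d → ℝ) (f : ℝ → ℝ)
      (α : Fin n → ℝ) (X : Fin d → ℝ) (j : Fin d),
      (∀ k i, x k i ∈ Set.Icc (0 : ℝ) 1) →
      (∀ i, X i ∈ Set.Icc (0 : ℝ) 1) →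
      0 < h j → h j ≤ ((m : ℝ) ^ 2)⁻¹ / 4 →
      (∀ ω, 0 ≤ f ω) →
      (∀ ω, f ω ≤ c * (1 + ω ^ 2) ^ (-(ν + 1 / 2))) →
      Integrable f →
      (∑ k, |α k| ≤ 2 * d) →
      (∀ k, 4 * (m : ℝ) ^ 2 * h j < |x k j - X j| → α k = 0) →
      (∀ p : Polynomial ℝ, p.natDegree ≤ m →
        ∑ k, α k * p.eval (x k j) = p.eval (X j)) →
      (∫ ω : ℝ,
          ‖(1 - ∑ k, (α k : ℂ) * Complex.exp (Complex.I * ω * (x k j - X j)))‖ ^ 2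
            * f ω)
        ≤ C * d ^ 2 * (h j) ^ (2 * ν) := by
  set E := (4 * (m : ℝ) ^ 2) ^ (m + 1) * Real.exp (4 * m ^ 2)
  refine ⟨c * (8 * E ^ 2 + 9 / ν), fun d n x h f α X j _ _ hh _ _ hfb hfi hα hαsupp hrep => ?_⟩
  have hd : (1 : ℝ) ≤ d := Nat.one_le_cast.2 j.pos
  have hQ := integral_norm_errorSymbol_sq_mul_le (δ := fun k => x k j - X j)
    (fun l hl => sum_mul_sub_pow_eq_zero_pow (x := fun k => x k j) hrep hl)
    (fun k hk => not_lt.1 fun hlt => hk (hαsupp k hlt)) hα (by positivity) hh hc.le hν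
    (by linarith) hfb hfi
  simp only [errorSymbol, ofReal_sub] at hQ
  refine hQ.trans ?_
  calc c * (2 * (2 * d * E) ^ 2 + (1 + 2 * d) ^ 2 / ν) * h j ^ (2 * ν)
      = c * h j ^ (2 * ν) * (8 * E ^ 2 * d ^ 2 + (1 + 2 * d) ^ 2 / ν) := by ring
    _ ≤ c * h j ^ (2 * ν) * (8 * E ^ 2 * d ^ 2 + 9 * d ^ 2 / ν) := by
        have : 0 ≤ h j ^ (2 * ν) := Real.rpow_nonneg hh.le _
        gcongr
        nlinarith
    _ = c * (8 * E ^ 2 + 9 / ν) * d ^ 2 * h j ^ (2 * ν) := by ring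
end
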